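/- Let three players have measures on [0,1] with densities: f₁ = 2.4 on (0,1/6)∪(1/2,2/3) and 0.3 elsewhere; f₂ = 2.4 on (1/6,1/3)∪(2/3,5/6) and 0.3 elsewhere; f₃ = 2.4 on (1/3,1/2)∪(5/6,1) and 0.3 elsewhere. The contiguous allocation giving [0,1/3] to player 1, [1/3,2/3] to player 3, and [2/3,1] to player 2 gives each player value 0.45, while the allocation giving each player i the set where fᵢ = 2.4 gives each player value 0.8. Hence the contiguous allocation is not weakly Pareto optimal. -/

import Mathlib

open MeasureTheory ENNReal

/-- Player 1's density: `2.4 = 12/5` on `(0,1/6) ∪ (1/2,2/3)`, `0.3 = 3/10` elsewhere. -/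
noncomputable def f1 (x : ℝ) : ℝ≥0∞ :=
  if x ∈ Set.Ioo (0:ℝ) (1/6) ∪ Set.Ioo (1/2 : ℝ) (2/3) then 12/5 else 3/10

/-- Player 2's density: `2.4` on `(1/6,1/3) ∪ (2/3,5/6)`, `0.3` elsewhere. -/
noncomputable def f2 (x : ℝ) : ℝ≥0∞ :=
  if x ∈ Set.Ioo (1/6 : ℝ) (1/3) ∪ Set.Ioo (2/3 : ℝ) (5/6) then 12/5 else 3/10

/-- Player 3's density: `2.4` on `(1/3,1/2) ∪ (5/6,1)`, `0.3` elsewhere. -/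
noncomputable def f3 (x : ℝ) : ℝ≥0∞ :=
  if x ∈ Set.Ioo (1/3 : ℝ) (1/2) ∪ Set.Ioo (5/6 : ℝ) 1 then 12/5 else 3/10

noncomputable def mu1 : Measure ℝ := (volume.restrict (Set.Icc (0:ℝ) 1)).withDensity f1
noncomputable def mu2 : Measure ℝ := (volume.restrict (Set.Icc (0:ℝ) 1)).withDensity f2
noncomputable def mu3 : Measure ℝ := (volume.restrict (Set.Icc (0:ℝ) 1)).withDensity f3

/-- Weak Pareto optimality of a three-player allocation `(A₁, A₂, A₃)`:
no other partition of the cake strictly improves every player. -/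
def WeaklyPO3 (ν₁ ν₂ ν₃ : Measure ℝ) (X A₁ A₂ A₃ : Set ℝ) : Prop :=
  ¬ ∃ B₁ B₂ B₃ : Set ℝ, B₁ ∪ B₂ ∪ B₃ = X ∧
      Disjoint B₁ B₂ ∧ Disjoint B₁ B₃ ∧ Disjoint B₂ B₃ ∧
      ν₁ A₁ < ν₁ B₁ ∧ ν₂ A₂ < ν₂ B₂ ∧ ν₃ A₃ < ν₃ B₃

/-! Each player's density is `12/5` on a favourite set of length `1/3` and `3/10` elsewhere. Every
contiguous piece meets its owner's favourite set in an interval of length `1/6`, which gives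
`12/5 · 1/6 + 3/10 · 1/6 = 9/20`, whereas the favourite set alone is worth `12/5 · 1/3 = 4/5`. The
favourite sets are disjoint, so giving players 1 and 2 theirs and player 3 the rest improves all. -/

open Set

section
variable {α : Type*} [MeasurableSpace α] {μ : Measure α} {I U S : Set α} [DecidablePred (· ∈ U)]

theorem withDensity_ite_apply (hU : MeasurableSet U) (hS : MeasurableSet S) (a b : ℝ≥0∞) :
    μ.withDensity (fun x => if x ∈ U then a else b) S = a * μ (S ∩ U) + b * μ (S \ U) := by
  rw [withDensity_apply _ hS, ← lintegral_inter_add_sdiff _ S hU,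
    setLIntegral_congr_fun (hS.inter hU) (fun x hx => if_pos hx.2),
    setLIntegral_congr_fun (hS.diff hU) (fun x hx => if_neg hx.2),
    setLIntegral_const, setLIntegral_const]

theorem restrict_withDensity_ite_apply_of_subset (hU : MeasurableSet U) (hS : MeasurableSet S)
    (hSI : S ⊆ I) (a b : ℝ≥0∞) :
    (μ.restrict I).withDensity (fun x => if x ∈ U then a else b) S
      = a * μ (S ∩ U) + b * μ (S \ U) := by
  rw [withDensity_ite_apply hU hS, Measure.restrict_eq_self _ (inter_subset_left.trans hSI),
    Measure.restrict_eq_self _ (sdiff_subset.trans hSI)]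

theorem restrict_withDensity_ite_apply_self (hU : MeasurableSet U) (hUI : U ⊆ I) (a b : ℝ≥0∞) :
    (μ.restrict I).withDensity (fun x => if x ∈ U then a else b) U = a * μ U := by
  rw [restrict_withDensity_ite_apply_of_subset hU hU hUI, inter_self, sdiff_self,
    measure_empty, mul_zero, add_zero]

end

theorem volume_Icc_sdiff_of_inter_eq_Ioo {U : Set ℝ} {a b c d : ℝ} (hcd : c ≤ d)
    (h : Icc a b ∩ U = Ioo c d) :
    volume (Icc a b \ U) = ENNReal.ofReal ((b - a) - (d - c)) := by
  rw [← sdiff_self_inter, h, measure_sdiff (h ▸ inter_subset_left)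
    measurableSet_Ioo.nullMeasurableSet measure_Ioo_lt_top.ne, Real.volume_Icc, Real.volume_Ioo,
    ofReal_sub _ (sub_nonneg.2 hcd)]

theorem volume_Ioo_union_Ioo {a b c d : ℝ} (hbc : b ≤ c) :
    volume (Ioo a b ∪ Ioo c d) = ENNReal.ofReal (b - a) + ENNReal.ofReal (d - c) := by
  rw [measure_union (disjoint_left.2 fun _ hb hc => lt_asymm (hb.2.trans_le hbc) hc.1)
    measurableSet_Ioo, Real.volume_Ioo, Real.volume_Ioo]

theorem restrict_withDensity_ite_apply_Icc {I U : Set ℝ} [DecidablePred (· ∈ U)]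
    (hU : MeasurableSet U) {a b c d : ℝ} (hI : Icc a b ⊆ I) (hcd : c ≤ d)
    (h : Icc a b ∩ U = Ioo c d) (p q : ℝ≥0∞) :
    (volume.restrict I).withDensity (fun x => if x ∈ U then p else q) (Icc a b)
      = p * ENNReal.ofReal (d - c) + q * ENNReal.ofReal ((b - a) - (d - c)) := by
  rw [restrict_withDensity_ite_apply_of_subset hU measurableSet_Icc hI, h, Real.volume_Ioo,
    volume_Icc_sdiff_of_inter_eq_Ioo hcd h]

theorem contiguous_allocation_values :
    mu1 (Icc 0 (1/3)) = 9/20 ∧ mu3 (Icc (1/3) (2/3)) = 9/20 ∧ mu2 (Icc (2/3) 1) = 9/20 := by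
  unfold mu1 mu2 mu3 f1 f2 f3
  refine ⟨?_, ?_, ?_⟩
  on_goal 1 => rw [restrict_withDensity_ite_apply_Icc (c := 0) (d := 1/6)
      (measurableSet_Ioo.union measurableSet_Ioo) (Icc_subset_Icc le_rfl (by norm_num))
      (by norm_num) (by ext; simp; grind)]
  on_goal 2 => rw [restrict_withDensity_ite_apply_Icc (c := 1/3) (d := 1/2)
      (measurableSet_Ioo.union measurableSet_Ioo) (Icc_subset_Icc (by norm_num) (by norm_num))
      (by norm_num) (by ext; simp; grind)]
  on_goal 3 => rw [restrict_withDensity_ite_apply_Icc (c := 2/3) (d := 5/6)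
      (measurableSet_Ioo.union measurableSet_Ioo) (Icc_subset_Icc (by norm_num) le_rfl)
      (by norm_num) (by ext; simp; grind)]
  all_goals
    refine (toReal_eq_toReal_iff' (by finiteness) (by finiteness)).1 ?_
    simp (disch := finiteness) [toReal_add]
    norm_num

theorem favourite_set_values :
    mu1 (Ioo 0 (1/6) ∪ Ioo (1/2) (2/3)) = 4/5 ∧ mu2 (Ioo (1/6) (1/3) ∪ Ioo (2/3) (5/6)) = 4/5 ∧
      mu3 (Ioo (1/3) (1/2) ∪ Ioo (5/6) 1) = 4/5 := by
  unfold mu1 mu2 mu3 f1 f2 f3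
  refine ⟨?_, ?_, ?_⟩ <;>
    rw [restrict_withDensity_ite_apply_self (measurableSet_Ioo.union measurableSet_Ioo)
      (by intro x; simp; grind), volume_Ioo_union_Ioo (by norm_num)] <;>
    refine (toReal_eq_toReal_iff' (by finiteness) (by finiteness)).1 ?_ <;>
    simp (disch := finiteness) [toReal_add] <;> norm_num

theorem stmt_7 :
    mu1 (Set.Icc (0:ℝ) (1/3)) = 9/20 ∧
    mu3 (Set.Icc (1/3 : ℝ) (2/3)) = 9/20 ∧
    mu2 (Set.Icc (2/3 : ℝ) 1) = 9/20 ∧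
    mu1 (Set.Ioo (0:ℝ) (1/6) ∪ Set.Ioo (1/2 : ℝ) (2/3)) = 4/5 ∧
    mu2 (Set.Ioo (1/6 : ℝ) (1/3) ∪ Set.Ioo (2/3 : ℝ) (5/6)) = 4/5 ∧
    mu3 (Set.Ioo (1/3 : ℝ) (1/2) ∪ Set.Ioo (5/6 : ℝ) 1) = 4/5 ∧
    ¬ WeaklyPO3 mu1 mu2 mu3 (Set.Icc (0:ℝ) 1)
        (Set.Icc (0:ℝ) (1/3)) (Set.Icc (2/3 : ℝ) 1) (Set.Icc (1/3 : ℝ) (2/3)) := by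
  obtain ⟨h1, h2, h3⟩ := contiguous_allocation_values
  obtain ⟨h4, h5, h6⟩ := favourite_set_values
  have hlt : (9/20 : ℝ≥0∞) < 4/5 :=
    (toReal_lt_toReal (by finiteness) (by finiteness)).1 (by norm_num)
  refine ⟨h1, h2, h3, h4, h5, h6, fun hPO => hPO ⟨_, _, Icc 0 1 \ (Ioo 0 (1/6) ∪ Ioo (1/2) (2/3) ∪
    (Ioo (1/6) (1/3) ∪ Ioo (2/3) (5/6))), ?_, ?_, ?_, ?_, h1 ▸ h4 ▸ hlt, h3 ▸ h5 ▸ hlt, ?_⟩⟩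
  · exact union_sdiff_cancel (union_subset (by intro x; simp; grind) (by intro x; simp; grind))
  · exact disjoint_left.2 (by intro x; simp; grind)
  · exact disjoint_sdiff_right.mono_left subset_union_left
  · exact disjoint_sdiff_right.mono_left subset_union_right
  · exact h2 ▸ hlt.trans_le (h6 ▸ measure_mono (by intro x; simp; grind))
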